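/- Let m ≥ 2 and let τ be a symmetric trilinear form on the standard Euclidean space ℝ^m that satisfies the superconformal identity. Let e be a unit vector at which the function x ↦ τ(x,x,x) attains its maximum over the unit sphere S^{m−1} ⊂ ℝ^m, and set t = τ(e,e,e). Then t > 0, τ(e,e,v) = 0 for every vector v orthogonal to e, and τ(e,v,w) = ((t − √(t²+4))/2)·⟨v,w⟩ for all vectors v, w orthogonal to e. -/

import Mathlib

open scoped BigOperators RealInnerProductSpace

/-- A trilinear form is symmetric if it is invariant under all permutations of its
arguments (generated by the two adjacent transpositions). -/
def TrilinearIsSymm (m : ℕ)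
    (τ : EuclideanSpace ℝ (Fin m) →ₗ[ℝ] EuclideanSpace ℝ (Fin m) →ₗ[ℝ]
          EuclideanSpace ℝ (Fin m) →ₗ[ℝ] ℝ) : Prop :=
  (∀ x y z, τ x y z = τ y x z) ∧ (∀ x y z, τ x y z = τ x z y)

/-- The superconformal identity for a trilinear form on Euclidean `ℝ^m`, expressed using
the standard orthonormal basis `(eᵣ)`:
`∑ᵣ (τ(eᵣ,p,s)τ(eᵣ,q,t) − τ(eᵣ,p,t)τ(eᵣ,q,s)) = −(⟨p,s⟩⟨q,t⟩ − ⟨p,t⟩⟨q,s⟩)`. -/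
def TrilinearIsSuperconformal (m : ℕ)
    (τ : EuclideanSpace ℝ (Fin m) →ₗ[ℝ] EuclideanSpace ℝ (Fin m) →ₗ[ℝ]
          EuclideanSpace ℝ (Fin m) →ₗ[ℝ] ℝ) : Prop :=
  ∀ p q s t : EuclideanSpace ℝ (Fin m),
    ∑ r : Fin m,
      (τ (EuclideanSpace.single r 1) p s * τ (EuclideanSpace.single r 1) q t
        - τ (EuclideanSpace.single r 1) p t * τ (EuclideanSpace.single r 1) q s)
      = -(⟪p, s⟫ * ⟪q, t⟫ - ⟪p, t⟫ * ⟪q, s⟫)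

/-!
For `v ⊥ e` and `u = s²‖v‖²`, maximality gives `τ(x,x,x) ≤ t‖x‖³ ≤ t (1 + 3u/2 + 3u²/8)` at
`x = e + s v`; the resulting quartic in `s` is nonpositive, so its linear coefficient
`3 τ(e,e,v)` vanishes and its quadratic one gives `τ(e,v,v) ≤ t/2 ‖v‖²`.
Let `A` be the symmetric operator with `⟪A v, w⟫ = τ(e,v,w)`. Then `A e = t e`, `A` preserves
`e⊥`, and the superconformal identity at `(e, v, e, w)` says `A² - t A - 1 = 0` on `e⊥`. So on `e⊥`
the eigenvalues of `A` are roots of `λ² - t λ - 1`, and the second-order bound excludes the root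
`(t + √(t² + 4))/2 > t/2`. Finally, `t = 0` would make the cubic, hence `τ`, vanish, whereas
`τ(e,v,v) = λ‖v‖² < 0` for a nonzero `v ⊥ e`, which exists as `m ≥ 2`.
-/

lemma pow_three_le_of_sq_eq_one_add {r u : ℝ} (hr : 0 ≤ r) (hu : 0 ≤ u) (h : r ^ 2 = 1 + u) :
    r ^ 3 ≤ 1 + 3 / 2 * u + 3 / 8 * u ^ 2 := by
  nlinarith [sq_nonneg (r - 1), sq_nonneg (r ^ 2 - 1), mul_nonneg hr hu, sq_nonneg (r - 1 - u / 2)]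

lemma Continuous.nonpos_of_forall_pos {f : ℝ → ℝ} (hf : Continuous f) (h : ∀ s > 0, f s ≤ 0) :
    f 0 ≤ 0 :=
  le_of_tendsto (hf.continuousWithinAt (s := Set.Ioi 0)) (eventually_nhdsWithin_of_forall h)

lemma eq_zero_and_nonpos_of_forall_quartic_nonpos {a b c d : ℝ}
    (h : ∀ s : ℝ, a * s + b * s ^ 2 + c * s ^ 3 + d * s ^ 4 ≤ 0) : a = 0 ∧ b ≤ 0 := by
  have ha_nonpos : a ≤ 0 := by
    simpa using (show Continuous fun s : ℝ => a + b * s + c * s ^ 2 + d * s ^ 3 by fun_prop)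
      |>.nonpos_of_forall_pos fun s hs => by nlinarith [h s]
  have ha_nonneg : 0 ≤ a := by
    simpa using (show Continuous fun s : ℝ => -a + b * s - c * s ^ 2 + d * s ^ 3 by fun_prop)
      |>.nonpos_of_forall_pos fun s hs => by nlinarith [h (-s)]
  obtain rfl : a = 0 := le_antisymm ha_nonpos ha_nonneg
  refine ⟨rfl, ?_⟩
  simpa using (show Continuous fun s : ℝ => b + c * s + d * s ^ 2 by fun_prop)
    |>.nonpos_of_forall_pos fun s hs => by nlinarith [h s, pow_pos hs 2]

section Trilinear

variable {E : Type*} [NormedAddCommGroup E] [InnerProductSpace ℝ E]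
  {τ : E →ₗ[ℝ] E →ₗ[ℝ] E →ₗ[ℝ] ℝ} {e : E}

lemma trilinear_apply_smul_self (c : ℝ) (x : E) :
    τ (c • x) (c • x) (c • x) = c ^ 3 * τ x x x := by
  simp only [map_smul, LinearMap.smul_apply, smul_eq_mul]
  ring

lemma trilinear_apply_add_self (h₁ : ∀ x y z, τ x y z = τ y x z)
    (h₂ : ∀ x y z, τ x y z = τ x z y) (x y : E) :
    τ (x + y) (x + y) (x + y) = τ x x x + 3 * τ x x y + 3 * τ x y y + τ y y y := by
  simp only [map_add, LinearMap.add_apply]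
  rw [h₂ x y x, h₁ y x x, h₂ x y x, h₁ y x y, h₂ y y x, h₁ y x y]
  ring

lemma trilinear_apply_self_eq_zero (h₁ : ∀ x y z, τ x y z = τ y x z)
    (h₂ : ∀ x y z, τ x y z = τ x z y) (h : ∀ x, τ x x x = 0) (x y : E) : τ x y y = 0 := by
  have hadd := trilinear_apply_add_self h₁ h₂ x y
  have hsub := trilinear_apply_add_self h₁ h₂ x (-y)
  simp only [map_neg, LinearMap.neg_apply, h] at hadd hsub
  linarith

lemma trilinear_apply_self_le_of_isMaxOn (hmax : IsMaxOn (fun x => τ x x x) (Metric.sphere 0 1) e)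
    (x : E) : τ x x x ≤ τ e e e * ‖x‖ ^ 3 := by
  rcases eq_or_ne x 0 with rfl | hx
  · simp
  have hunit := isMaxOn_iff.1 hmax (‖x‖⁻¹ • x) (by simp [norm_smul, hx])
  simp only [trilinear_apply_smul_self, inv_pow] at hunit
  have hpos : 0 < ‖x‖ ^ 3 := by positivity
  rwa [inv_mul_le_iff₀ hpos, mul_comm] at hunit

lemma trilinear_apply_self_nonneg_of_isMaxOn (he : ‖e‖ = 1)
    (hmax : IsMaxOn (fun x => τ x x x) (Metric.sphere 0 1) e) : 0 ≤ τ e e e := by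
  have := isMaxOn_iff.1 hmax (-e) (by simpa using he)
  simp only [map_neg, LinearMap.neg_apply, neg_neg] at this
  linarith

lemma trilinear_apply_self_pos_of_isMaxOn (h₁ : ∀ x y z, τ x y z = τ y x z)
    (h₂ : ∀ x y z, τ x y z = τ x z y) (he : ‖e‖ = 1)
    (hmax : IsMaxOn (fun x => τ x x x) (Metric.sphere 0 1) e) {v : E} (hv : τ e v v < 0) :
    0 < τ e e e := by
  refine (trilinear_apply_self_nonneg_of_isMaxOn he hmax).lt_of_ne fun hzero => hv.ne ?_
  refine trilinear_apply_self_eq_zero h₁ h₂ (fun x => le_antisymm ?_ ?_) e v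
  · simpa [← hzero] using trilinear_apply_self_le_of_isMaxOn hmax x
  · simpa [← hzero] using trilinear_apply_self_le_of_isMaxOn hmax (-x)

lemma trilinear_quartic_nonpos_of_isMaxOn (h₁ : ∀ x y z, τ x y z = τ y x z)
    (h₂ : ∀ x y z, τ x y z = τ x z y) (he : ‖e‖ = 1)
    (hmax : IsMaxOn (fun x => τ x x x) (Metric.sphere 0 1) e) {v : E} (hv : ⟪e, v⟫ = 0)
    (s : ℝ) :
    3 * τ e e v * s + 3 * (τ e v v - τ e e e / 2 * ‖v‖ ^ 2) * s ^ 2 + τ v v v * s ^ 3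
      + -(3 / 8 * τ e e e * ‖v‖ ^ 4) * s ^ 4 ≤ 0 := by
  have hnorm : ‖e + s • v‖ ^ 2 = 1 + s ^ 2 * ‖v‖ ^ 2 := by
    rw [norm_add_sq_real, real_inner_smul_right, hv, he, norm_smul, mul_pow, Real.norm_eq_abs,
      sq_abs]
    ring
  have hcube := pow_three_le_of_sq_eq_one_add (norm_nonneg _) (by positivity) hnorm
  have hle := trilinear_apply_self_le_of_isMaxOn hmax (e + s • v)
  rw [trilinear_apply_add_self h₁ h₂] at hle
  simp only [map_smul, LinearMap.smul_apply, smul_eq_mul] at hle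
  nlinarith [mul_le_mul_of_nonneg_left hcube (trilinear_apply_self_nonneg_of_isMaxOn he hmax)]

lemma trilinear_first_and_second_order_of_isMaxOn (h₁ : ∀ x y z, τ x y z = τ y x z)
    (h₂ : ∀ x y z, τ x y z = τ x z y) (he : ‖e‖ = 1)
    (hmax : IsMaxOn (fun x => τ x x x) (Metric.sphere 0 1) e) {v : E} (hv : ⟪e, v⟫ = 0) :
    τ e e v = 0 ∧ τ e v v ≤ τ e e e / 2 * ‖v‖ ^ 2 := by
  obtain ⟨hfirst, hsecond⟩ := eq_zero_and_nonpos_of_forall_quartic_nonpos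
    (trilinear_quartic_nonpos_of_isMaxOn h₁ h₂ he hmax hv)
  exact ⟨by linarith, by linarith⟩

end Trilinear

section InnerProduct

variable {E : Type*} [NormedAddCommGroup E] [InnerProductSpace ℝ E]

lemma eq_inner_smul_of_forall_inner_eq_zero {e x : E} (he : ‖e‖ = 1)
    (h : ∀ v, ⟪e, v⟫ = 0 → ⟪x, v⟫ = 0) : x = ⟪e, x⟫ • e := by
  have hperp : ⟪e, x - ⟪e, x⟫ • e⟫ = 0 := by
    rw [inner_sub_right, real_inner_smul_right, real_inner_self_eq_norm_sq, he]
    ring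
  rw [← sub_eq_zero, ← inner_self_eq_zero (𝕜 := ℝ)]
  nth_rw 1 [inner_sub_left, real_inner_smul_left, h _ hperp, real_inner_comm, hperp]
  ring

lemma exists_ne_zero_inner_eq_zero [FiniteDimensional ℝ E] (hE : 2 ≤ Module.finrank ℝ E)
    (e : E) : ∃ v ≠ 0, ⟪e, v⟫ = 0 := by
  have hsum := (ℝ ∙ e).finrank_add_finrank_orthogonal
  have hspan : Module.finrank ℝ (ℝ ∙ e) ≤ 1 := by
    simpa using finrank_span_le_card (R := ℝ) ({e} : Set E)
  have hne : (ℝ ∙ e)ᗮ ≠ ⊥ := by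
    rw [ne_eq, ← Submodule.finrank_eq_zero]
    omega
  obtain ⟨v, hv, hv0⟩ := Submodule.exists_mem_ne_zero_of_ne_bot hne
  exact ⟨v, hv0, Submodule.mem_orthogonal_singleton_iff_inner_right.1 hv⟩

lemma LinearMap.IsSymmetric.eq_smul_of_inner_map_map {A : E →ₗ[ℝ] E} (hA : A.IsSymmetric)
    {K : Submodule ℝ E} (hAK : ∀ v ∈ K, A v ∈ K) {T : ℝ}
    (hsq : ∀ v ∈ K, ∀ w ∈ K, ⟪A v, A w⟫ = T * ⟪A v, w⟫ + ⟪v, w⟫)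
    (hle : ∀ w ∈ K, ⟪A w, w⟫ ≤ T / 2 * ‖w‖ ^ 2) {v : E} (hv : v ∈ K) :
    A v = ((T - √(T ^ 2 + 4)) / 2) • v := by
  set s := √(T ^ 2 + 4)
  have hs : s ^ 2 = T ^ 2 + 4 := Real.sq_sqrt (by positivity)
  have hs_pos : 0 < s := Real.sqrt_pos.2 (by positivity)
  set W := A v - ((T - s) / 2) • v
  have hW : W ∈ K := K.sub_mem (hAK v hv) (K.smul_mem _ hv)
  have hinner_AW : ⟪A W, W⟫ = ⟪A v, A W⟫ - (T - s) / 2 * ⟪A v, W⟫ := by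
    rw [hA W W, inner_sub_left, real_inner_smul_left, ← hA v W]
  have hnorm_W : ‖W‖ ^ 2 = ⟪A v, W⟫ - (T - s) / 2 * ⟪v, W⟫ := by
    rw [← real_inner_self_eq_norm_sq, inner_sub_left, real_inner_smul_left]
  -- `W = (A - λ) v` behaves as an eigenvector for the other root `μ = (T + s) / 2 > T / 2`,
  -- which `hle` forbids unless `W = 0`.
  have heigen : ⟪A W, W⟫ = (T + s) / 2 * ‖W‖ ^ 2 := by
    rw [hinner_AW, hnorm_W, hsq v hv W hW]
    linear_combination -⟪v, W⟫ / 4 * hs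
  have hW_zero : W = 0 := by
    have := hle W hW
    rw [← norm_eq_zero]
    nlinarith [norm_nonneg W]
  exact sub_eq_zero.1 hW_zero

end InnerProduct

section Euclidean

variable {m : ℕ}
  {τ : EuclideanSpace ℝ (Fin m) →ₗ[ℝ] EuclideanSpace ℝ (Fin m) →ₗ[ℝ]
    EuclideanSpace ℝ (Fin m) →ₗ[ℝ] ℝ}

lemma TrilinearIsSuperconformal.inner_map_map (hsc : TrilinearIsSuperconformal m τ)
    (hsymm : TrilinearIsSymm m τ) {e : EuclideanSpace ℝ (Fin m)} (he : ‖e‖ = 1)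
    {A : EuclideanSpace ℝ (Fin m) →ₗ[ℝ] EuclideanSpace ℝ (Fin m)}
    (hA : ∀ a x, ⟪A a, x⟫ = τ e a x) (hAe : A e = τ e e e • e)
    (v : EuclideanSpace ℝ (Fin m)) {w : EuclideanSpace ℝ (Fin m)} (hw : ⟪e, w⟫ = 0) :
    ⟪A v, A w⟫ = τ e e e * ⟪A v, w⟫ + ⟪v, w⟫ := by
  obtain ⟨h₁, h₂⟩ := hsymm
  let b := EuclideanSpace.basisFun (Fin m) ℝ
  have hb (r : Fin m) : EuclideanSpace.single r (1 : ℝ) = b r :=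
    (EuclideanSpace.basisFun_apply _ _ r).symm
  have hdiag : ∑ r, τ (b r) e e * τ (b r) v w = τ e e e * τ e v w := by
    have hee (r : Fin m) : τ (b r) e e = τ e e e * ⟪b r, e⟫ := by
      rw [h₁, h₂, ← hA, hAe, real_inner_smul_left, real_inner_comm]
    have hexpand : τ e v w = ∑ r, ⟪b r, e⟫ * τ (b r) v w := by
      conv_lhs => rw [← b.sum_repr' e]
      simp only [map_sum, map_smul, LinearMap.sum_apply, LinearMap.smul_apply, smul_eq_mul]
    simp_rw [hee, mul_assoc, ← Finset.mul_sum, hexpand]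
  have hcross : ∑ r, τ (b r) e w * τ (b r) v e = ⟪A w, A v⟫ := by
    rw [← b.sum_inner_mul_inner]
    refine Finset.sum_congr rfl fun r _ => ?_
    rw [hA, real_inner_comm (A v), hA, h₁ (b r) e w, h₂ e (b r) w, h₁ (b r) v e, h₂ v (b r) e,
      h₁ v e]
  have h := hsc e v e w
  simp only [hb, Finset.sum_sub_distrib, hdiag, hcross, hw, real_inner_self_eq_norm_sq, he] at h
  rw [← hA v w] at h
  linarith [real_inner_comm (A v) (A w)]

end Euclidean

/-- if `τ` is a symmetric trilinear form on `ℝ^m` satisfying the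
superconformal identity, and the cubic `x ↦ τ(x,x,x)` attains its maximum over the unit
sphere at a unit vector `e`, then with `t = τ(e,e,e)` one has `t > 0`, `τ(e,e,v) = 0`
for `v ⊥ e`, and `τ(e,v,w) = ((t − √(t²+4))/2)⟨v,w⟩` for `v, w ⊥ e`. -/
theorem superconformal_taylor_coefficients_at_max (m : ℕ) (hm : 2 ≤ m)
    (τ : EuclideanSpace ℝ (Fin m) →ₗ[ℝ] EuclideanSpace ℝ (Fin m) →ₗ[ℝ]
          EuclideanSpace ℝ (Fin m) →ₗ[ℝ] ℝ)
    (hsymm : TrilinearIsSymm m τ) (hsc : TrilinearIsSuperconformal m τ)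
    (e : EuclideanSpace ℝ (Fin m)) (he : ‖e‖ = 1)
    (hmax : ∀ x : EuclideanSpace ℝ (Fin m), ‖x‖ = 1 → τ x x x ≤ τ e e e) :
    0 < τ e e e ∧
    (∀ v : EuclideanSpace ℝ (Fin m), ⟪e, v⟫ = 0 → τ e e v = 0) ∧
    (∀ v w : EuclideanSpace ℝ (Fin m), ⟪e, v⟫ = 0 → ⟪e, w⟫ = 0 →
      τ e v w = ((τ e e e - Real.sqrt ((τ e e e) ^ 2 + 4)) / 2) * ⟪v, w⟫) := by
  have ⟨h₁, h₂⟩ := hsymm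
  have hmaxOn : IsMaxOn (fun x => τ x x x) (Metric.sphere 0 1) e :=
    isMaxOn_iff.2 fun x hx => hmax x (mem_sphere_zero_iff_norm.1 hx)
  have hopt {v} (hv : ⟪e, v⟫ = 0) := trilinear_first_and_second_order_of_isMaxOn h₁ h₂ he hmaxOn hv
  obtain ⟨A, hA⟩ : ∃ A : EuclideanSpace ℝ (Fin m) →ₗ[ℝ] EuclideanSpace ℝ (Fin m),
      ∀ a x, ⟪A a, x⟫ = τ e a x :=
    ⟨(InnerProductSpace.continuousLinearMapOfBilin (𝕜 := ℝ)
        (τ e).toContinuousBilinearMap).toLinearMap,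
      InnerProductSpace.continuousLinearMapOfBilin_apply _⟩
  have hA_symm : A.IsSymmetric := fun a x => by rw [hA, real_inner_comm, hA, h₂]
  have hAe : A e = τ e e e • e := by
    rw [eq_inner_smul_of_forall_inner_eq_zero he fun v hv => (hA e v).trans (hopt hv).1,
      real_inner_comm, hA]
  have hK {v} : v ∈ (ℝ ∙ e)ᗮ ↔ ⟪e, v⟫ = 0 := Submodule.mem_orthogonal_singleton_iff_inner_right
  have heigen {v} (hv : ⟪e, v⟫ = 0) : A v = ((τ e e e - √(τ e e e ^ 2 + 4)) / 2) • v :=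
    hA_symm.eq_smul_of_inner_map_map
      (fun w hw => hK.2 (by rw [real_inner_comm, hA, h₂, (hopt (hK.1 hw)).1]))
      (fun v _ w hw => hsc.inner_map_map hsymm he hA hAe v (hK.1 hw))
      (fun w hw => (hA w w).trans_le (hopt (hK.1 hw)).2) (hK.2 hv)
  have hform (v w) (hv : ⟪e, v⟫ = 0) (_ : ⟪e, w⟫ = 0) :
      τ e v w = ((τ e e e - √(τ e e e ^ 2 + 4)) / 2) * ⟪v, w⟫ := by
    rw [← hA, heigen hv, real_inner_smul_left]
  refine ⟨?_, fun v hv => (hopt hv).1, hform⟩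
  obtain ⟨v, hv0, hv⟩ := exists_ne_zero_inner_eq_zero (by simpa using hm) e
  refine trilinear_apply_self_pos_of_isMaxOn h₁ h₂ he hmaxOn (v := v) ?_
  have hroot : τ e e e < √(τ e e e ^ 2 + 4) := Real.lt_sqrt_of_sq_lt (by linarith)
  rw [hform v v hv hv, real_inner_self_eq_norm_sq]
  nlinarith [pow_pos (norm_pos_iff.2 hv0) 2]
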